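/- arXiv:2101.00300 — 2 statements merged into one kernel-verified Lean document; each statement's English description precedes it below -/
import Mathlib

section
/- (Simulation Lemma, Lemma 1.) Let M1 = (T1, R1) and M2 = (T2, R2) be two stochastic finite MDPs on the same nonempty finite state space S and nonempty finite action space A, let H ≥ 1 be a horizon, and let π : S → PMF(A) be any stochastic stationary policy, with h-step values V1 and V2 in M1 and M2 respectively. Assume: (i) |R1(s,a) − R2(s,a)| ≤ δR for all (s,a) ∈ S × A; (ii) Σ_{s'∈S} |T1(s,a)(s') − T2(s,a)(s')| ≤ δT for all (s,a) ∈ S × A; (iii) R1(s,a) ≥ 0 and R2(s,a) ≥ 0 for all (s,a), and for every sequence of state-action pairs (s_0,a_0), …, (s_{H−1},a_{H−1}) and each j ∈ {1,2} we have Σ_{t<H} R_j(s_t,a_t) ≤ 1. Then for every state s0, |V1(H,s0) − V2(H,s0)| ≤ δR·H + δT·H. -/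
open scoped BigOperators

/-- The `h`-step value of a stochastic stationary policy `π` in the stochastic finite MDP
with transition kernel `T` and reward function `R`:
`V 0 s = 0`, `V (h+1) s = Σ_a π(s)(a) · (R(s,a) + Σ_{s'} T(s,a)(s') · V h s')`. -/
noncomputable def stochVal {S A : Type*} [Fintype S] [Fintype A]
    (T : S → A → PMF S) (R : S → A → ℝ) (π : S → PMF A) : ℕ → S → ℝ
  | 0, _ => 0
  | h + 1, s =>
      ∑ a : A, ((π s) a).toReal *
        (R s a + ∑ s' : S, ((T s a) s').toReal * stochVal T R π h s')

/-!
Each step of the Bellman recursion adds to the gap `sup |V₁ - V₂|` at most `δR` (rewards)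
plus the error of averaging `V₂` against `T₁` instead of `T₂`, which is at most
`δT · sup |V₂|`. Applying the trajectory bound to a constant trajectory shows that every
reward of `M₂` is at most `1 / H`, so `0 ≤ V₂ h ≤ h / H ≤ 1` for `h ≤ H`;
summing the per-step error `δR + δT` over `H` steps gives the claim.
-/

namespace PMF

variable {α : Type*} [Fintype α]

theorem sum_toReal_eq_one (p : PMF α) : ∑ a, (p a).toReal = 1 := by
  rw [← ENNReal.toReal_sum fun a _ => p.apply_ne_top a, ← tsum_fintype (L := .unconditional _),
    p.tsum_coe, ENNReal.toReal_one]

theorem sum_toReal_mul_le {f : α → ℝ} {C : ℝ} (p : PMF α) (hf : ∀ a, f a ≤ C) :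
    ∑ a, (p a).toReal * f a ≤ C :=
  calc ∑ a, (p a).toReal * f a ≤ ∑ a, (p a).toReal * C :=
        Finset.sum_le_sum fun a _ => mul_le_mul_of_nonneg_left (hf a) ENNReal.toReal_nonneg
    _ = C := by rw [← Finset.sum_mul, p.sum_toReal_eq_one, one_mul]

theorem abs_sum_toReal_mul_le {f : α → ℝ} {C : ℝ} (p : PMF α) (hf : ∀ a, |f a| ≤ C) :
    |∑ a, (p a).toReal * f a| ≤ C :=
  (Finset.abs_sum_le_sum_abs _ _).trans <| by
    simpa only [abs_mul, ENNReal.abs_toReal] using p.sum_toReal_mul_le hf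

end PMF

theorem abs_sum_mul_le_of_abs_le {ι : Type*} (s : Finset ι) (w g : ι → ℝ) {B : ℝ}
    (hg : ∀ i ∈ s, |g i| ≤ B) : |∑ i ∈ s, w i * g i| ≤ (∑ i ∈ s, |w i|) * B :=
  calc |∑ i ∈ s, w i * g i| ≤ ∑ i ∈ s, |w i| * |g i| := by
        simpa only [abs_mul] using Finset.abs_sum_le_sum_abs (fun i => w i * g i) s
    _ ≤ (∑ i ∈ s, |w i|) * B := by
        rw [Finset.sum_mul]
        exact Finset.sum_le_sum fun i hi => mul_le_mul_of_nonneg_left (hg i hi) (abs_nonneg _)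

theorem abs_sum_toReal_mul_sub_le {α : Type*} [Fintype α] (p₁ p₂ : PMF α) (f₁ f₂ : α → ℝ)
    {ε B : ℝ} (hf : ∀ a, |f₁ a - f₂ a| ≤ ε) (hf₂ : ∀ a, |f₂ a| ≤ B) :
    |∑ a, (p₁ a).toReal * f₁ a - ∑ a, (p₂ a).toReal * f₂ a|
      ≤ ε + (∑ a, |(p₁ a).toReal - (p₂ a).toReal|) * B := by
  have hsplit : ∑ a, (p₁ a).toReal * f₁ a - ∑ a, (p₂ a).toReal * f₂ a
      = ∑ a, (p₁ a).toReal * (f₁ a - f₂ a) + ∑ a, ((p₁ a).toReal - (p₂ a).toReal) * f₂ a := by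
    simp only [mul_sub, sub_mul, Finset.sum_sub_distrib]
    ring
  rw [hsplit]
  exact (abs_add_le _ _).trans <| add_le_add (p₁.abs_sum_toReal_mul_le hf)
    (abs_sum_mul_le_of_abs_le _ _ _ fun a _ => hf₂ a)

namespace stochVal

variable {S A : Type*} [Fintype S] [Fintype A] (π : S → PMF A)

theorem succ_apply (T : S → A → PMF S) (R : S → A → ℝ) (h : ℕ) (s : S) :
    stochVal T R π (h + 1) s
      = ∑ a, ((π s) a).toReal * (R s a + ∑ s', ((T s a) s').toReal * stochVal T R π h s') :=
  rfl

theorem nonneg {T : S → A → PMF S} {R : S → A → ℝ} (hR : ∀ s a, 0 ≤ R s a) (h : ℕ) (s : S) :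
    0 ≤ stochVal T R π h s := by
  induction h generalizing s with
  | zero => rfl
  | succ h ih =>
    exact Finset.sum_nonneg fun a _ => mul_nonneg ENNReal.toReal_nonneg <|
      add_nonneg (hR s a) <| Finset.sum_nonneg fun s' _ =>
        mul_nonneg ENNReal.toReal_nonneg (ih s')

theorem le_mul {T : S → A → PMF S} {R : S → A → ℝ} {c : ℝ} (hR : ∀ s a, R s a ≤ c)
    (h : ℕ) (s : S) : stochVal T R π h s ≤ h * c := by
  induction h generalizing s with
  | zero => simp [stochVal]
  | succ h ih =>
    rw [succ_apply, Nat.cast_succ, add_one_mul, add_comm]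
    exact (π s).sum_toReal_mul_le fun a => add_le_add (hR s a) ((T s a).sum_toReal_mul_le ih)

theorem abs_sub_succ_le {T₁ T₂ : S → A → PMF S} {R₁ R₂ : S → A → ℝ} {δR δT ε B : ℝ}
    (hrew : ∀ s a, |R₁ s a - R₂ s a| ≤ δR)
    (htrans : ∀ s a, ∑ s', |((T₁ s a) s').toReal - ((T₂ s a) s').toReal| ≤ δT)
    {h : ℕ} (hε : ∀ s, |stochVal T₁ R₁ π h s - stochVal T₂ R₂ π h s| ≤ ε)
    (hB : ∀ s, |stochVal T₂ R₂ π h s| ≤ B) (hB₀ : 0 ≤ B) (s : S) :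
    |stochVal T₁ R₁ π (h + 1) s - stochVal T₂ R₂ π (h + 1) s| ≤ δR + ε + δT * B := by
  simp only [succ_apply, ← Finset.sum_sub_distrib, ← mul_sub]
  refine (π s).abs_sum_toReal_mul_le fun a => ?_
  calc |R₁ s a + ∑ s', ((T₁ s a) s').toReal * stochVal T₁ R₁ π h s'
        - (R₂ s a + ∑ s', ((T₂ s a) s').toReal * stochVal T₂ R₂ π h s')|
      ≤ |R₁ s a - R₂ s a| + |∑ s', ((T₁ s a) s').toReal * stochVal T₁ R₁ π h s'
        - ∑ s', ((T₂ s a) s').toReal * stochVal T₂ R₂ π h s'| := by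
        rw [add_sub_add_comm]
        exact abs_add_le _ _
    _ ≤ δR + (ε + δT * B) := add_le_add (hrew s a) <|
        (abs_sum_toReal_mul_sub_le _ _ _ _ hε hB).trans <|
          add_le_add_right (mul_le_mul_of_nonneg_right (htrans s a) hB₀) _
    _ = δR + ε + δT * B := by ring

theorem abs_sub_le {T₁ T₂ : S → A → PMF S} {R₁ R₂ : S → A → ℝ} {δR δT B : ℝ}
    (hrew : ∀ s a, |R₁ s a - R₂ s a| ≤ δR)
    (htrans : ∀ s a, ∑ s', |((T₁ s a) s').toReal - ((T₂ s a) s').toReal| ≤ δT)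
    (hB₀ : 0 ≤ B) {n : ℕ} (hB : ∀ h < n, ∀ s, |stochVal T₂ R₂ π h s| ≤ B) (s : S) :
    |stochVal T₁ R₁ π n s - stochVal T₂ R₂ π n s| ≤ n * (δR + δT * B) := by
  induction n generalizing s with
  | zero => simp [stochVal]
  | succ n ih =>
    refine (abs_sub_succ_le π hrew htrans (ih fun h hh => hB h (by omega))
      (hB n n.lt_succ_self) hB₀ s).trans_eq ?_
    push_cast
    ring

end stochVal

theorem mul_le_one_of_forall_sum_fin_le_one {S A : Type*} {R : S → A → ℝ} {H : ℕ}
    (hbdd : ∀ sa : Fin H → S × A, ∑ t : Fin H, R (sa t).1 (sa t).2 ≤ 1) (s : S) (a : A) :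
    H * R s a ≤ 1 := by
  simpa using hbdd fun _ => (s, a)

theorem simulation_lemma_general
    {S A : Type*} [Fintype S] [Fintype A]
    (T1 T2 : S → A → PMF S) (R1 R2 : S → A → ℝ)
    (H : ℕ) (hH : 1 ≤ H)
    (π : S → PMF A)
    (δR δT : ℝ)
    (hrew : ∀ s : S, ∀ a : A, |R1 s a - R2 s a| ≤ δR)
    (htrans : ∀ s : S, ∀ a : A,
      (∑ s' : S, |((T1 s a) s').toReal - ((T2 s a) s').toReal|) ≤ δT)
    (hnonneg2 : ∀ s : S, ∀ a : A, 0 ≤ R2 s a)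
    (hbdd2 : ∀ sa : Fin H → S × A, (∑ t : Fin H, R2 (sa t).1 (sa t).2) ≤ 1)
    (s0 : S) :
    |stochVal T1 R1 π H s0 - stochVal T2 R2 π H s0| ≤ δR * H + δT * H := by
  have hHpos : (0 : ℝ) < H := by exact_mod_cast hH
  have hR2 : ∀ s a, R2 s a ≤ 1 / H := fun s a => by
    rw [le_div_iff₀' hHpos]
    exact mul_le_one_of_forall_sum_fin_le_one hbdd2 s a
  have hV2 : ∀ h < H, ∀ s, |stochVal T2 R2 π h s| ≤ 1 := fun h hh s => by
    rw [abs_of_nonneg (stochVal.nonneg π hnonneg2 h s)]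
    calc stochVal T2 R2 π h s ≤ h * (1 / H) := stochVal.le_mul π hR2 h s
      _ ≤ H * (1 / H) := by gcongr
      _ = 1 := by field_simp
  calc |stochVal T1 R1 π H s0 - stochVal T2 R2 π H s0| ≤ H * (δR + δT * 1) :=
        stochVal.abs_sub_le π hrew htrans zero_le_one hV2 s0
    _ = δR * H + δT * H := by ring

/-- **Simulation Lemma (Lemma 1).** -/
theorem simulation_lemma
    {S A : Type*} [Fintype S] [Nonempty S] [Fintype A] [Nonempty A]
    (T1 T2 : S → A → PMF S) (R1 R2 : S → A → ℝ)
    (H : ℕ) (hH : 1 ≤ H)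
    (π : S → PMF A)
    (δR δT : ℝ) (hδR : 0 ≤ δR) (hδT : 0 ≤ δT)
    (hrew : ∀ s : S, ∀ a : A, |R1 s a - R2 s a| ≤ δR)
    (htrans : ∀ s : S, ∀ a : A,
      (∑ s' : S, |((T1 s a) s').toReal - ((T2 s a) s').toReal|) ≤ δT)
    (hnonneg1 : ∀ s : S, ∀ a : A, 0 ≤ R1 s a)
    (hnonneg2 : ∀ s : S, ∀ a : A, 0 ≤ R2 s a)
    (hbdd1 : ∀ sa : Fin H → S × A, (∑ t : Fin H, R1 (sa t).1 (sa t).2) ≤ 1)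
    (hbdd2 : ∀ sa : Fin H → S × A, (∑ t : Fin H, R2 (sa t).1 (sa t).2) ≤ 1)
    (s0 : S) :
    |stochVal T1 R1 π H s0 - stochVal T2 R2 π H s0| ≤ δR * H + δT * H :=
  simulation_lemma_general T1 T2 R1 R2 H hH π δR δT hrew htrans hnonneg2 hbdd2 s0
end

section
/- (Trajectory distribution bound, Eq. (D.1).) Let T1, T2 : S → A → PMF(S) be transition kernels on a nonempty finite state space S and nonempty finite action space A, let π : S → A be a deterministic stationary policy, let H ≥ 1, and fix an initial state s0 ∈ S. For j ∈ {1,2} define the probability of a state trajectory τ : Fin H → S by P_j(τ) = Π_{t=0}^{H−1} T_j(σ(t), π(σ(t)))(τ(t)), where σ(0) = s0 and σ(t) = τ(t−1) for t ≥ 1, with probabilities taken as real numbers. If Σ_{s'∈S} |T1(s,a)(s') − T2(s,a)(s')| ≤ δT for all (s,a) ∈ S × A, then Σ_{τ : Fin H → S} |P1(τ) − P2(τ)| ≤ δT·H. -/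
open scoped BigOperators

/-- The state preceding step `t` of the trajectory `τ` started at `s0`:
`σ 0 = s0` and `σ t = τ (t-1)` for `t ≥ 1`. -/
def prevState {S : Type*} (s0 : S) {H : ℕ} (τ : Fin H → S) (t : Fin H) : S :=
  if h : (t : ℕ) = 0 then s0
  else τ ⟨(t : ℕ) - 1, lt_of_le_of_lt (Nat.sub_le _ _) t.isLt⟩

/-- The probability of the state trajectory `τ : Fin H → S` under transition kernel `T`,
deterministic stationary policy `π`, and initial state `s0`:
`P(τ) = Π_{t=0}^{H-1} T(σ(t), π(σ(t)))(τ(t))` with `σ(0) = s0`, `σ(t) = τ(t-1)` for `t ≥ 1`. -/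
noncomputable def trajProb {S A : Type*} (T : S → A → PMF S) (π : S → A)
    (s0 : S) (H : ℕ) (τ : Fin H → S) : ℝ :=
  ∏ t : Fin H, ((T (prevState s0 τ t) (π (prevState s0 τ t))) (τ t)).toReal

/-!
Induct on `H`, peeling off the first step: with `p_j = T_j(s0, π s0)` and `P_j^s` the trajectory
probabilities started at `s`, `P_j(s :: τ) = p_j(s) · P_j^s(τ)`. Splitting
`p₁P₁ - p₂P₂ = (p₁ - p₂)P₁ + p₂(P₁ - P₂)`, the first part contributes at most `δT` because each
`P₁^s` sums to one, and the second at most `δT (H - 1)` by induction because `p₂` sums to one.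
-/

open Finset

lemma prevState_cons_succ {S : Type*} (s0 s1 : S) {H : ℕ} (τ : Fin H → S) (t : Fin H) :
    prevState s0 (Fin.cons s1 τ) t.succ = prevState s1 τ t := by
  unfold prevState
  rcases t with ⟨_ | k, hk⟩
  · rfl
  · simp only [Fin.succ_mk, Nat.add_sub_cancel, dif_neg (Nat.succ_ne_zero _)]
    exact Fin.cons_succ (α := fun _ => S) s1 τ ⟨k, by omega⟩

lemma trajProb_cons {S A : Type*} (T : S → A → PMF S) (π : S → A)
    (s0 s1 : S) (H : ℕ) (τ : Fin H → S) :
    trajProb T π s0 (H + 1) (Fin.cons s1 τ) =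
      (T s0 (π s0) s1).toReal * trajProb T π s1 H τ := by
  simp only [trajProb, Fin.prod_univ_succ, prevState_cons_succ, Fin.cons_succ, Fin.cons_zero]
  rfl

lemma Fintype.sum_fin_succ_pi {α M : Type*} [Fintype α] [AddCommMonoid M] {n : ℕ}
    (f : (Fin (n + 1) → α) → M) :
    ∑ τ, f τ = ∑ a, ∑ τ : Fin n → α, f (Fin.cons a τ) := by
  rw [← (Fin.consEquiv fun _ => α).sum_comp, Fintype.sum_prod_type]
  rfl

lemma PMF.sum_toReal_eq_one_s1 {α : Type*} [Fintype α] (p : PMF α) : ∑ a, (p a).toReal = 1 := by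
  rw [← ENNReal.toReal_sum fun a _ => p.apply_ne_top a, ← tsum_fintype (L := .unconditional _),
    p.tsum_coe, ENNReal.toReal_one]

lemma sum_trajProb {S A : Type*} [Fintype S] (T : S → A → PMF S) (π : S → A) (s0 : S)
    (H : ℕ) : ∑ τ, trajProb T π s0 H τ = 1 := by
  induction H generalizing s0 with
  | zero => simp [trajProb]
  | succ H ih =>
    simp only [Fintype.sum_fin_succ_pi, trajProb_cons, ← mul_sum, ih, mul_one]
    exact PMF.sum_toReal_eq_one_s1 _

lemma sum_abs_mul_sub_mul_le {α β : Type*} [Fintype α] [Fintype β] (p q : α → ℝ)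
    (f g : α → β → ℝ) (hq : ∀ a, 0 ≤ q a) (hf : ∀ a b, 0 ≤ f a b) (hf_sum : ∀ a, ∑ b, f a b = 1) :
    ∑ a, ∑ b, |p a * f a b - q a * g a b| ≤
      ∑ a, |p a - q a| + ∑ a, q a * ∑ b, |f a b - g a b| := by
  have pointwise (a : α) (b : β) :
      |p a * f a b - q a * g a b| ≤ |p a - q a| * f a b + q a * |f a b - g a b| :=
    calc |p a * f a b - q a * g a b|
        = |(p a - q a) * f a b + q a * (f a b - g a b)| := by congr 1; ring
      _ ≤ |(p a - q a) * f a b| + |q a * (f a b - g a b)| := abs_add_le _ _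
      _ = |p a - q a| * f a b + q a * |f a b - g a b| := by
        rw [abs_mul, abs_mul, abs_of_nonneg (hf a b), abs_of_nonneg (hq a)]
  calc ∑ a, ∑ b, |p a * f a b - q a * g a b|
      ≤ ∑ a, ∑ b, (|p a - q a| * f a b + q a * |f a b - g a b|) := by
        gcongr with a _ b _
        exact pointwise a b
    _ = ∑ a, |p a - q a| + ∑ a, q a * ∑ b, |f a b - g a b| := by
        simp only [sum_add_distrib, ← mul_sum, hf_sum, mul_one]

theorem trajectory_distribution_bound_general
    {S A : Type*} [Fintype S]
    (T1 T2 : S → A → PMF S) (π : S → A)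
    (H : ℕ) (s0 : S)
    (δT : ℝ)
    (htrans : ∀ s : S, ∀ a : A,
      (∑ s' : S, |((T1 s a) s').toReal - ((T2 s a) s').toReal|) ≤ δT) :
    (∑ τ : Fin H → S, |trajProb T1 π s0 H τ - trajProb T2 π s0 H τ|) ≤ δT * H := by
  induction H generalizing s0 with
  | zero => simp [trajProb]
  | succ H ih =>
    calc ∑ τ : Fin (H + 1) → S, |trajProb T1 π s0 (H + 1) τ - trajProb T2 π s0 (H + 1) τ|
        = ∑ s, ∑ τ, |(T1 s0 (π s0) s).toReal * trajProb T1 π s H τ -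
            (T2 s0 (π s0) s).toReal * trajProb T2 π s H τ| := by
          simp only [Fintype.sum_fin_succ_pi, trajProb_cons]
      _ ≤ ∑ s, |(T1 s0 (π s0) s).toReal - (T2 s0 (π s0) s).toReal| +
            ∑ s, (T2 s0 (π s0) s).toReal *
              ∑ τ, |trajProb T1 π s H τ - trajProb T2 π s H τ| :=
          sum_abs_mul_sub_mul_le _ _ _ _ (fun _ => ENNReal.toReal_nonneg)
            (fun _ _ => prod_nonneg fun _ _ => ENNReal.toReal_nonneg) (sum_trajProb T1 π · H)
      _ ≤ δT + ∑ s, (T2 s0 (π s0) s).toReal * (δT * H) := by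
          gcongr with s
          · exact htrans s0 (π s0)
          · exact ih s
      _ = δT * ↑(H + 1) := by
          rw [← sum_mul, PMF.sum_toReal_eq_one_s1]
          push_cast
          ring

/-- **Trajectory distribution bound (Eq. (D.1)).** -/
theorem trajectory_distribution_bound
    {S A : Type*} [Fintype S] [Nonempty S] [Fintype A] [Nonempty A]
    (T1 T2 : S → A → PMF S) (π : S → A)
    (H : ℕ) (hH : 1 ≤ H) (s0 : S)
    (δT : ℝ) (hδT : 0 ≤ δT)
    (htrans : ∀ s : S, ∀ a : A,
      (∑ s' : S, |((T1 s a) s').toReal - ((T2 s a) s').toReal|) ≤ δT) :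
    (∑ τ : Fin H → S, |trajProb T1 π s0 H τ - trajProb T2 π s0 H τ|) ≤ δT * H :=
  trajectory_distribution_bound_general T1 T2 π H s0 δT htrans
end
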